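/- For the martingale variance computation in the Buckley-Osthus model: with a_0 > 0 and p_{>m} as in the limiting degree distribution, the quantities σ² := Σ_{k≥0} p_{>k+1}/(a_0+k)² − (2/(a_0+1)) Σ_{k≥0} p_{>k+1}/(a_0+k) + 1/(a_0+1)² and β := Σ_{k≥0} p_{>k+1}/(a_0+k)² − 1/(a_0+1)² satisfy β > 0. -/

import Mathlib

open scoped BigOperators

/-- Rising factorial `x^(n) = x(x+1)...(x+n-1)`. -/
noncomputable def risingFac (x : ℝ) (n : ℕ) : ℝ := ∏ i ∈ Finset.range n, (x + i)

/-- Limiting degree frequencies of the Buckley-Osthus model. -/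
noncomputable def BOp (a : ℝ) (k : ℕ) : ℝ :=
  (a + 1) * risingFac a (k - 1) / risingFac (2 * a + 1) k

/-- Tail sum `p_{>m}`. -/
noncomputable def BOtail (a : ℝ) (m : ℕ) : ℝ := ∑' j : ℕ, BOp a (m + 1 + j)

/-- The closed form of the tail: `T a k = a^{(k)} / (2a+1)^{(k)}`. -/
noncomputable def BOT (a : ℝ) (k : ℕ) : ℝ := risingFac a k / risingFac (2 * a + 1) k

lemma risingFac_pos {x : ℝ} (hx : 0 < x) (n : ℕ) : 0 < risingFac x n := by
  unfold risingFac
  exact Finset.prod_pos fun i _ => by positivity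

lemma risingFac_succ (x : ℝ) (n : ℕ) :
    risingFac x (n + 1) = risingFac x n * (x + n) := Finset.prod_range_succ _ _

lemma risingFac_zero (x : ℝ) : risingFac x 0 = 1 := Finset.prod_range_zero _

section

variable {a : ℝ} (ha : 0 < a)

include ha

lemma BOT_pos (k : ℕ) : 0 < BOT a k :=
  div_pos (risingFac_pos ha k) (risingFac_pos (by linarith) k)

lemma BOT_zero : BOT a 0 = 1 := by
  simp [BOT, risingFac_zero]

lemma denom_pos (k : ℕ) : (0:ℝ) < 2 * a + 1 + k := by positivity

lemma BOT_succ (k : ℕ) : BOT a (k + 1) = BOT a k * ((a + k) / (2 * a + 1 + k)) := by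
  have h1 := (risingFac_pos ha k).ne'
  have h2 := (risingFac_pos (show (0:ℝ) < 2*a+1 by linarith) k).ne'
  have h3 := (denom_pos ha k).ne'
  unfold BOT
  rw [risingFac_succ, risingFac_succ]
  field_simp

lemma BOp_eq_sub (k : ℕ) : BOp a (k + 1) = BOT a k - BOT a (k + 1) := by
  have h1 := (risingFac_pos ha k).ne'
  have h2 := (risingFac_pos (show (0:ℝ) < 2*a+1 by linarith) k).ne'
  have h3 := (denom_pos ha k).ne'
  rw [BOT_succ ha]
  unfold BOp BOT
  simp only [Nat.add_sub_cancel]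
  rw [risingFac_succ]
  field_simp
  ring

lemma BOT_div_eq (k : ℕ) : BOT a (k + 1) / (a + k) = (BOT a k - BOT a (k + 1)) / (a + 1) := by
  have hak : (0:ℝ) < a + k := by positivity
  have h3 := (denom_pos ha k).ne'
  rw [BOT_succ ha]
  field_simp
  ring

lemma BOT_succ_le (k : ℕ) : BOT a (k + 1) ≤ BOT a k := by
  rw [BOT_succ ha]
  have hT := (BOT_pos ha k).le
  have hak : (0:ℝ) ≤ a + k := by positivity
  have : (a + k) / (2 * a + 1 + k) ≤ 1 := by
    rw [div_le_one (denom_pos ha k)]; linarith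
  calc BOT a k * ((a + k) / (2 * a + 1 + k)) ≤ BOT a k * 1 := by
        apply mul_le_mul_of_nonneg_left this hT
    _ = BOT a k := mul_one _

lemma BOT_antitone : Antitone (BOT a) :=
  antitone_nat_of_succ_le (BOT_succ_le ha)

/-- `W k = (a+k) * T k` is antitone with `W k - W (k+1) = a * T (k+1)`. -/
lemma W_sub (k : ℕ) :
    (a + k) * BOT a k - (a + (k+1 : ℕ)) * BOT a (k + 1) = a * BOT a (k + 1) := by
  have h3 := (denom_pos ha k).ne'
  rw [BOT_succ ha]
  push_cast
  field_simp
  ring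

lemma W_antitone : Antitone (fun k : ℕ => (a + k) * BOT a k) := by
  apply antitone_nat_of_succ_le
  intro k
  have := W_sub ha k
  have hpos := (BOT_pos ha (k+1)).le
  nlinarith

lemma BOT_le (k : ℕ) : BOT a k ≤ a / (a + k) := by
  have h := W_antitone ha (Nat.zero_le k)
  simp only [Nat.cast_zero, add_zero, BOT_zero ha, mul_one] at h
  have hak : (0:ℝ) < a + k := by positivity
  rw [le_div_iff₀ hak, mul_comm]
  exact h

lemma BOT_tendsto : Filter.Tendsto (BOT a) Filter.atTop (nhds 0) := by
  have hub : Filter.Tendsto (fun k : ℕ => a / (a + k)) Filter.atTop (nhds 0) := by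
    apply Filter.Tendsto.div_atTop tendsto_const_nhds
    apply Filter.tendsto_atTop_add_const_left
    exact tendsto_natCast_atTop_atTop
  refine squeeze_zero (fun k => (BOT_pos ha k).le) (fun k => BOT_le ha k) hub

omit ha in
/-- Telescoping sums of antitone sequences. -/
lemma hasSum_telescope {g : ℕ → ℝ} (hmono : ∀ k, g (k + 1) ≤ g k) {L : ℝ}
    (hL : Filter.Tendsto g Filter.atTop (nhds L)) :
    HasSum (fun k => g k - g (k + 1)) (g 0 - L) := by
  rw [hasSum_iff_tendsto_nat_of_nonneg (fun i => sub_nonneg.2 (hmono i))]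
  have hps : ∀ n, ∑ i ∈ Finset.range n, (g i - g (i + 1)) = g 0 - g n := fun n =>
    Finset.sum_range_sub' g n
  simp only [hps]
  exact tendsto_const_nhds.sub hL

lemma BOtail_eq (m : ℕ) : BOtail a m = BOT a m := by
  have hg : Filter.Tendsto (fun j : ℕ => BOT a (m + j)) Filter.atTop (nhds 0) := by
    have := (BOT_tendsto ha).comp (Filter.tendsto_add_atTop_nat m)
    simpa [Function.comp_def, Nat.add_comm] using this
  have hmono : ∀ j : ℕ, BOT a (m + (j+1)) ≤ BOT a (m + j) := by
    intro j
    have : m + (j + 1) = (m + j) + 1 := by ring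
    rw [this]
    exact BOT_succ_le ha (m + j)
  have h := hasSum_telescope hmono hg
  have heq : (fun j : ℕ => BOT a (m + j) - BOT a (m + (j + 1)))
      = fun j : ℕ => BOp a (m + 1 + j) := by
    funext j
    have h1 : m + 1 + j = (m + j) + 1 := by ring
    rw [h1, BOp_eq_sub ha (m + j)]
    ring_nf
  rw [heq] at h
  simpa [BOtail] using h.tsum_eq

/-- The exact sum `∑ T_{k+1}/(a+k) = 1/(a+1)`. -/
lemma hasSum_one : HasSum (fun k : ℕ => BOT a (k + 1) / (a + k)) (1 / (a + 1)) := by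
  have h := (hasSum_telescope (fun k => BOT_succ_le ha k) (BOT_tendsto ha)).div_const (a + 1)
  have heq : (fun k : ℕ => (BOT a k - BOT a (k + 1)) / (a + 1))
      = fun k : ℕ => BOT a (k + 1) / (a + k) := by
    funext k
    exact (BOT_div_eq ha k).symm
  rw [heq] at h
  simpa [BOT_zero ha] using h

/-- `∑ T_{k+1}` exists and is at most 1. -/
lemma hasSum_S : ∃ S : ℝ, HasSum (fun k : ℕ => BOT a (k + 1)) S ∧ S ≤ 1 := by
  set W : ℕ → ℝ := fun k => (a + k) * BOT a k with hW
  have hanti : Antitone W := W_antitone ha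
  have hbdd : BddBelow (Set.range W) := by
    refine ⟨0, ?_⟩
    rintro x ⟨k, rfl⟩
    have : (0:ℝ) < a + k := by positivity
    exact (mul_pos this (BOT_pos ha k)).le
  have hL : Filter.Tendsto W Filter.atTop (nhds (⨅ k, W k)) :=
    tendsto_atTop_ciInf hanti hbdd
  set L := ⨅ k, W k with hLdef
  have hL0 : 0 ≤ L := by
    apply le_ciInf
    intro k
    have : (0:ℝ) < a + k := by positivity
    exact (mul_pos this (BOT_pos ha k)).le
  have h := hasSum_telescope (fun k => hanti (Nat.le_succ k)) hL
  have heq : (fun k : ℕ => W k - W (k + 1)) = fun k : ℕ => a * BOT a (k + 1) := by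
    funext k
    simpa [hW] using W_sub ha k
  rw [heq] at h
  have hW0 : W 0 = a := by simp [hW, BOT_zero ha]
  rw [hW0] at h
  have h' := h.div_const a
  have heq2 : (fun k : ℕ => a * BOT a (k + 1) / a) = fun k : ℕ => BOT a (k + 1) := by
    funext k
    field_simp
  rw [heq2] at h'
  refine ⟨(a - L) / a, h', ?_⟩
  rw [div_le_one ha]
  linarith

lemma summable_sq : Summable (fun k : ℕ => BOT a (k + 1) / (a + k) ^ 2) := by
  apply Summable.of_nonneg_of_le
    (g := fun k : ℕ => BOT a (k + 1) / (a + k) ^ 2)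
    (f := fun k : ℕ => BOT a (k + 1) / (a + k) * (1 / a))
  · intro k
    have h1 := (BOT_pos ha (k+1)).le
    have : (0:ℝ) < a + k := by positivity
    positivity
  · intro k
    have hak : (0:ℝ) < a + k := by positivity
    have hT := (BOT_pos ha (k+1)).le
    rw [sq, show BOT a (k + 1) / (a + (k:ℝ)) * (1 / a)
      = BOT a (k + 1) / ((a + (k:ℝ)) * a) by rw [mul_one_div, div_div]]
    gcongr
    nlinarith [Nat.cast_nonneg (α := ℝ) k]
  · exact (hasSum_one ha).summable.mul_right _

end

theorem bo_beta_positive (a₀ : ℝ) (ha₀ : 0 < a₀) :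
    0 < (∑' k : ℕ, BOtail a₀ (k + 1) / (a₀ + k) ^ 2) - 1 / (a₀ + 1) ^ 2 := by
  have ha := ha₀
  -- replace BOtail by BOT
  have hrw : (∑' k : ℕ, BOtail a₀ (k + 1) / (a₀ + k) ^ 2)
      = ∑' k : ℕ, BOT a₀ (k + 1) / (a₀ + k) ^ 2 := by
    apply tsum_congr
    intro k
    rw [BOtail_eq ha]
  rw [hrw]
  obtain ⟨S, hS, hS1⟩ := hasSum_S ha
  have h1 := hasSum_one ha
  have h2 := summable_sq ha
  set A := ∑' k : ℕ, BOT a₀ (k + 1) / (a₀ + k) ^ 2 with hA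
  -- the nonnegative series f k = T_{k+1} * (1/(a+k) - 1/(a+1))^2
  set f : ℕ → ℝ := fun k => BOT a₀ (k + 1) * (1 / (a₀ + k) - 1 / (a₀ + 1)) ^ 2 with hf
  have hfid : ∀ k : ℕ, f k = BOT a₀ (k + 1) / (a₀ + k) ^ 2
      - (2 / (a₀ + 1)) * (BOT a₀ (k + 1) / (a₀ + k))
      + (1 / (a₀ + 1) ^ 2) * BOT a₀ (k + 1) := by
    intro k
    have hak : (0:ℝ) < a₀ + k := by positivity
    have ha1 : (0:ℝ) < a₀ + 1 := by linarith
    simp only [hf]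
    field_simp
    ring
  have hsum1 : Summable (fun k : ℕ => (2 / (a₀ + 1)) * (BOT a₀ (k + 1) / (a₀ + k))) :=
    h1.summable.mul_left _
  have hsum2 : Summable (fun k : ℕ => (1 / (a₀ + 1) ^ 2) * BOT a₀ (k + 1)) :=
    hS.summable.mul_left _
  have hfsummable : Summable f := by
    have : Summable (fun k : ℕ => BOT a₀ (k + 1) / (a₀ + k) ^ 2
        - (2 / (a₀ + 1)) * (BOT a₀ (k + 1) / (a₀ + k))
        + (1 / (a₀ + 1) ^ 2) * BOT a₀ (k + 1)) := (h2.sub hsum1).add hsum2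
    exact this.congr (fun k => (hfid k).symm)
  have htsum : ∑' k, f k = A - (2 / (a₀ + 1)) * (1 / (a₀ + 1)) + (1 / (a₀ + 1) ^ 2) * S := by
    have e1 : ∑' k, f k = ∑' k : ℕ, (BOT a₀ (k + 1) / (a₀ + k) ^ 2
        - (2 / (a₀ + 1)) * (BOT a₀ (k + 1) / (a₀ + k))
        + (1 / (a₀ + 1) ^ 2) * BOT a₀ (k + 1)) := tsum_congr hfid
    rw [e1, Summable.tsum_add (h2.sub hsum1) hsum2, Summable.tsum_sub h2 hsum1,
      tsum_mul_left, tsum_mul_left, h1.tsum_eq, hS.tsum_eq]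
  -- lower bound: ∑ f ≥ f 0 > 0
  have hf0 : 0 < f 0 := by
    simp only [hf]
    have hT1 := BOT_pos ha 1
    have : (1 / (a₀ + (0:ℕ)) - 1 / (a₀ + 1)) > 0 := by
      push_cast
      rw [add_zero, gt_iff_lt, sub_pos]
      apply div_lt_div_of_pos_left one_pos ha₀
      linarith
    positivity
  have hfge : f 0 ≤ ∑' k, f k := by
    apply Summable.le_tsum hfsummable 0
    intro j _
    simp only [hf]
    have := (BOT_pos ha (j+1)).le
    positivity
  have ha1 : (0:ℝ) < a₀ + 1 := by linarith
  have hfinal : A - 1 / (a₀ + 1) ^ 2 = ∑' k, f k + (1 - S) * (1 / (a₀ + 1) ^ 2) := by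
    rw [htsum]
    field_simp
    ring
  rw [hfinal]
  have : 0 ≤ (1 - S) * (1 / (a₀ + 1) ^ 2) := by
    apply mul_nonneg (by linarith) (by positivity)
  linarith
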